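/- arXiv:2402.02189 — 3 statements merged into one kernel-verified Lean document; each statement's English description precedes it below -/
import Mathlib

section
/- For positive integers K and m with m ≤ K, the quantity (K·m − (K mod m))/(2m − 1) is greater than or equal to K·m/(m + min(K−1, 2m−2)). -/
theorem stmt0 (K m : ℕ) (hm : 1 ≤ m) (hmK : m ≤ K) :
    ((K * m - K % m : ℕ) : ℚ) / ((2 * m - 1 : ℕ) : ℚ) ≥
      ((K * m : ℕ) : ℚ) / ((m + min (K - 1) (2 * m - 2) : ℕ) : ℚ) := by
  have hK1 : 1 ≤ K := le_trans hm hmK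
  have hn1 : 0 < 2 * m - 1 := by omega
  have hn2 : 0 < m + min (K - 1) (2 * m - 2) := by omega
  have hd1 : (0:ℚ) < ((2 * m - 1 : ℕ) : ℚ) := by exact_mod_cast hn1
  have hd2 : (0:ℚ) < ((m + min (K - 1) (2 * m - 2) : ℕ) : ℚ) := by exact_mod_cast hn2
  rw [ge_iff_le, div_le_div_iff₀ hd2 hd1]
  have key : K * m * (2 * m - 1) ≤ (K * m - K % m) * (m + min (K - 1) (2 * m - 2)) := by
    have hr : K % m < m := Nat.mod_lt K (by omega)
    have hrK : K % m ≤ K * m :=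
      le_trans (le_of_lt hr) (le_trans hmK (Nat.le_mul_of_pos_right K (by omega)))
    rcases le_total (K - 1) (2 * m - 2) with h | h
    · rw [min_eq_left h]
      have hKm : K < 2 * m := by omega
      have hmod : K % m = K - m := by
        rw [Nat.mod_eq_sub_mod hmK, Nat.mod_eq_of_lt (by omega)]
      rw [hmod]
      have h1 : K - m ≤ K * m := le_trans (Nat.sub_le K m) (Nat.le_mul_of_pos_right K (by omega))
      zify [h1, hmK, hK1, show 1 ≤ 2 * m by omega]
      nlinarith [mul_nonneg (mul_nonneg (show (0:ℤ) ≤ (K:ℤ) - m by omega)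
        (show (0:ℤ) ≤ (K:ℤ) - 1 by omega)) (show (0:ℤ) ≤ (m:ℤ) - 1 by omega)]
    · rw [min_eq_right h]
      have hK2 : 2 * m - 1 ≤ K := by omega
      zify [hrK, show 1 ≤ 2 * m by omega, show 2 ≤ 2 * m by omega]
      have hrZ : (K % m : ℤ) ≤ (m:ℤ) - 1 := by omega
      have hKZ : (2:ℤ) * m - 1 ≤ (K:ℤ) := by omega
      nlinarith [mul_nonneg (sub_nonneg.mpr hrZ) (show (0:ℤ) ≤ 3*(m:ℤ) - 2 by omega),
        mul_nonneg (mul_nonneg (show (0:ℤ) ≤ (m:ℤ) - 1 by omega) (sub_nonneg.mpr hKZ))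
          (show (0:ℤ) ≤ (m:ℤ) by positivity),
        sq_nonneg ((m:ℤ) - 1)]
  calc ((K * m : ℕ) : ℚ) * ((2 * m - 1 : ℕ) : ℚ) = ((K * m * (2 * m - 1) : ℕ) : ℚ) := by
        push_cast; ring
    _ ≤ (((K * m - K % m) * (m + min (K - 1) (2 * m - 2)) : ℕ) : ℚ) := by exact_mod_cast key
    _ = ((K * m - K % m : ℕ) : ℚ) * ((m + min (K - 1) (2 * m - 2) : ℕ) : ℚ) := by
        push_cast; ring
end

section
/- For the 4×4 matrix M = N with zeros exactly on the diagonal and ones elsewhere, the filling G with G[p,q] = p for p ∈ {1,2,3} and q ≠ p, G[4,q] = q for q ∈ {2,3}, and G[4,1] = 0 achieves puzzle score 11/5. -/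
/-- Number of nonzero entries of `G`. -/
def nnz4 (G : Fin 4 → Fin 4 → ℕ) : ℕ :=
  ((Finset.univ ×ˢ Finset.univ).filter (fun x : Fin 4 × Fin 4 => G x.1 x.2 ≠ 0)).card

/-- Number of nonzero entries in row `p` of `G`. -/
def rowNnz4 (G : Fin 4 → Fin 4 → ℕ) (p : Fin 4) : ℕ :=
  (Finset.univ.filter (fun q : Fin 4 => G p q ≠ 0)).card

/-- Number of distinct positive values in `G^(p)`, i.e. `G` with row `p`
and column `p` removed (since `N = J - I`). -/
def gDist4 (G : Fin 4 → Fin 4 → ℕ) (p : Fin 4) : ℕ :=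
  (((Finset.univ ×ˢ Finset.univ).filter
      (fun x : Fin 4 × Fin 4 => x.1 ≠ p ∧ x.2 ≠ p ∧ G x.1 x.2 ≠ 0)).image
    (fun x : Fin 4 × Fin 4 => G x.1 x.2)).card

/-- The puzzle score of a filling `G`. -/
def score4 (G : Fin 4 → Fin 4 → ℕ) : ℚ :=
  (nnz4 G : ℚ) / ((Finset.univ.sup (fun p : Fin 4 => rowNnz4 G p + gDist4 G p) : ℕ) : ℚ)

/-- The filling with `G[p,q] = p` for `p ∈ {1,2,3}`, `q ≠ p`, `G[4,q] = q` for
`q ∈ {2,3}`, and `G[4,1] = G[4,4] = 0` (1-indexed). -/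
def G14 : Fin 4 → Fin 4 → ℕ := fun p q =>
  if p = q then 0
  else if p.val ≤ 2 then p.val + 1
  else if q.val = 0 then 0 else q.val + 1

theorem stmt14 : score4 G14 = 11 / 5 := by
  have h1 : nnz4 G14 = 11 := by decide
  have h2 : (Finset.univ.sup (fun p : Fin 4 => rowNnz4 G14 p + gDist4 G14 p)) = 5 := by decide
  rw [score4, h1, h2]
  norm_num
end

section
/- Let A be an M×M matrix whose (i,j) entry is a monomial a_{ij} = ∏_{ℓ=1}^{L} (X_i^{[ℓ]})^{α_{ij}^{[ℓ]}} in jointly continuous random variables {X_i^{[ℓ]}}, with positive integer exponent vectors α_{ij} ∈ (ℤ⁺)^L. If for every row i and distinct columns j ≠ j' the exponent vectors α_{ij} ≠ α_{ij'} differ, and the variables X_i^{[ℓ]} are mutually independent with continuous distributions (variables in different rows independent), then A is invertible with probability 1. -/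
/-!
The determinant is the evaluation at `(X i ℓ)` of the polynomial `det (∏ ℓ, x_{iℓ} ^ α i j ℓ)`.
Distinct exponent vectors within each row make distinct permutations contribute distinct
monomials, so this polynomial is nonzero. By independence, the law of `(X i ℓ)` is the product
of the atomless marginals, and the zero set of a nonzero polynomial is null for such a product:
by Fubini, almost every slice in one variable is the finite root set of a nonzero univariate
polynomial.
-/

open MeasureTheory ProbabilityTheory

namespace MvPolynomial

theorem det_of_monomial_ne_zero {n σ R : Type*} [Fintype n] [DecidableEq n] [CommRing R]
    [Nontrivial R] (d : n → n → σ →₀ ℕ)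
    (hd : Function.Injective fun τ : Equiv.Perm n => ∑ i, d (τ i) i) :
    (Matrix.of fun i j => monomial (d i j) (1 : R)).det ≠ 0 := by
  classical
  -- by `hd`, the identity is the only permutation contributing to the diagonal monomial
  have hcoeff : coeff (∑ i, d i i) (Matrix.of fun i j => monomial (d i j) (1 : R)).det = 1 := by
    simp only [Matrix.det_apply, Matrix.of_apply, ← monomial_sum_one, coeff_sum, coeff_smul,
      coeff_monomial]
    rw [Finset.sum_eq_single 1 (fun τ _ hτ => by
      rw [if_neg (show ∑ i, d (τ i) i ≠ ∑ i, d i i from fun h => hτ (hd h)), smul_zero])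
      (by simp)]
    simp
  intro h
  simp [h] at hcoeff

theorem det_of_prod_X_pow_ne_zero {n κ R : Type*} [Fintype n] [DecidableEq n] [Fintype κ]
    [CommRing R] [Nontrivial R] (α : n → n → κ → ℕ) (hα : ∀ i, Function.Injective (α i)) :
    (Matrix.of fun i j => ∏ ℓ, X (i, ℓ) ^ α i j ℓ :
      Matrix n n (MvPolynomial (n × κ) R)).det ≠ 0 := by
  set d : n → n → n × κ →₀ ℕ := fun i j => ∑ ℓ, Finsupp.single (i, ℓ) (α i j ℓ)
  have hentry (i j : n) : ∏ ℓ, X (i, ℓ) ^ α i j ℓ = monomial (d i j) (1 : R) := by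
    simp only [d, monomial_sum_one, X_pow_eq_monomial]
  have hexp (τ : Equiv.Perm n) :
      ⇑(∑ i, d (τ i) i) = fun p : n × κ => α p.1 (τ⁻¹ p.1) p.2 := by
    rw [← Finsupp.coe_univ_sum_single (fun p : n × κ => α p.1 (τ⁻¹ p.1) p.2),
      Fintype.sum_prod_type]
    conv_rhs => rw [← Equiv.sum_comp τ]
    simp [d]
  simp_rw [hentry]
  refine det_of_monomial_ne_zero d fun τ τ' h => inv_injective <| Equiv.ext fun i => hα i ?_
  have hfun := (hexp τ).symm.trans ((congrArg DFunLike.coe h).trans (hexp τ'))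
  funext ℓ
  exact congrFun hfun (i, ℓ)

section Measure

variable {𝕜 : Type*} [RCLike 𝕜]

theorem measurableSet_setOf_eval_eq_zero {ι : Type*} [Finite ι] (p : MvPolynomial ι 𝕜) :
    MeasurableSet {x : ι → 𝕜 | eval x p = 0} :=
  continuous_eval p |>.measurable (measurableSet_singleton 0)

theorem measure_pi_setOf_eval_eq_zero_of_fin :
    ∀ {n : ℕ} (m : Fin n → Measure 𝕜) [∀ i, SigmaFinite (m i)] [∀ i, NullSingletonClass (m i)]
      (p : MvPolynomial (Fin n) 𝕜), p ≠ 0 → Measure.pi m {x | eval x p = 0} = 0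
  | 0, m, _, _, p, hp => by
    obtain ⟨c, rfl⟩ := C_surjective (Fin 0) p
    simp_all
  | n + 1, m, _, _, p, hp => by
    set q := finSuccEquiv 𝕜 n p
    have hq : q ≠ 0 := (map_ne_zero_iff _ (finSuccEquiv 𝕜 n).injective).2 hp
    have hlead : q.leadingCoeff ≠ 0 := Polynomial.leadingCoeff_ne_zero.2 hq
    set e := MeasurableEquiv.piFinSuccAbove (fun _ => 𝕜) 0
    set T := e.symm ⁻¹' {x | eval x p = 0}
    have hT : MeasurableSet T := e.symm.measurable (measurableSet_setOf_eval_eq_zero p)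
    have hsection : ∀ᵐ s ∂Measure.pi (fun j => m j.succ), m 0 ((·, s) ⁻¹' T) = 0 := by
      have hnull := measure_pi_setOf_eval_eq_zero_of_fin (fun j => m j.succ) _ hlead
      filter_upwards [measure_eq_zero_iff_ae_notMem.1 hnull] with s hs
      -- the section at `s` is the root set of the specialisation of `q`, a nonzero polynomial
      have hqs : q.map (eval s) ≠ 0 := fun h => hs <| by
        simpa only [Polynomial.coeff_map, Polynomial.coeff_zero, Polynomial.coeff_natDegree] using
          congrArg (Polynomial.coeff · q.natDegree) h
      refine measure_mono_null (fun y hy => ?_)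
        ((Polynomial.finite_setOfPred_isRoot hqs).measure_zero _)
      rw [Set.mem_ofPred_eq, Polynomial.IsRoot, ← eval_eq_eval_mv_eval']
      simp only [T, e, Set.mem_preimage, MeasurableEquiv.piFinSuccAbove_symm_apply,
        Fin.insertNthEquiv_zero] at hy
      exact hy
    calc Measure.pi m {x | eval x p = 0}
        = (m 0).prod (Measure.pi fun j => m j.succ) T :=
          ((measurePreserving_piFinSuccAbove m 0).symm _).measure_preimage_equiv _ |>.symm
      _ = 0 := by
          rw [Measure.prod_apply_symm hT]
          exact (lintegral_congr_ae hsection).trans lintegral_zero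

theorem measure_pi_setOf_eval_eq_zero {ι : Type*} [Fintype ι] (m : ι → Measure 𝕜)
    [∀ i, SigmaFinite (m i)] [∀ i, NullSingletonClass (m i)] {p : MvPolynomial ι 𝕜}
    (hp : p ≠ 0) : Measure.pi m {x | eval x p = 0} = 0 := by
  set e := Fintype.equivFin ι
  have hpre : MeasurableEquiv.piCongrLeft (fun _ => 𝕜) e.symm ⁻¹' {x | eval x p = 0} =
      {x | eval x (rename e p) = 0} := by
    ext x
    have : Equiv.piCongrLeft (fun _ => 𝕜) e.symm x = x ∘ e := by
      funext i
      simpa using Equiv.piCongrLeft_apply_apply (fun _ => 𝕜) e.symm x (e i)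
    simp [MeasurableEquiv.coe_piCongrLeft, this, eval_rename]
  rw [← (measurePreserving_piCongrLeft m e.symm).measure_preimage_equiv, hpre]
  exact measure_pi_setOf_eval_eq_zero_of_fin _ _ <|
    (map_ne_zero_iff _ (rename_injective _ e.injective)).2 hp

end Measure

end MvPolynomial

namespace ProbabilityTheory

theorem iIndepFun.ae_eval_ne_zero {Ω ι 𝕜 : Type*} [RCLike 𝕜] [Fintype ι] [MeasurableSpace Ω]
    {μ : Measure Ω} {Y : ι → Ω → 𝕜} (hind : iIndepFun Y μ) (hY : ∀ i, AEMeasurable (Y i) μ)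
    (hatom : ∀ i c, μ {ω | Y i ω = c} = 0) {p : MvPolynomial ι 𝕜} (hp : p ≠ 0) :
    ∀ᵐ ω ∂μ, MvPolynomial.eval (fun i => Y i ω) p ≠ 0 := by
  have := hind.isProbabilityMeasure
  have (i : ι) : IsProbabilityMeasure (μ.map (Y i)) := Measure.isProbabilityMeasure_map (hY i)
  have (i : ι) : NullSingletonClass (μ.map (Y i)) :=
    ⟨fun c => (Measure.map_apply_of_aemeasurable (hY i) (measurableSet_singleton c)).trans
      (hatom i c)⟩
  have hnull := MvPolynomial.measure_pi_setOf_eval_eq_zero (fun i => μ.map (Y i)) hp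
  rw [← hind.map_fun_eq_pi_map hY, Measure.map_apply_of_aemeasurable
    (aemeasurable_pi_lambda _ hY) (MvPolynomial.measurableSet_setOf_eval_eq_zero p)] at hnull
  exact measure_eq_zero_iff_ae_notMem.1 hnull

end ProbabilityTheory

theorem stmt17_general (M L : ℕ)
    {Ω : Type*} [MeasurableSpace Ω] (μ : Measure Ω)
    (X : Fin M → Fin L → Ω → ℝ)
    (hmeas : ∀ i ℓ, Measurable (X i ℓ))
    -- the variables `X i ℓ` are mutually independent
    (hindep : iIndepFun
      (fun x : Fin M × Fin L => X x.1 x.2) μ)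
    -- each variable has a continuous (atomless) distribution
    (hcont : ∀ (i : Fin M) (ℓ : Fin L) (c : ℝ), μ {ω | X i ℓ ω = c} = 0)
    (α : Fin M → Fin M → Fin L → ℕ)
    -- within each row, exponent vectors of distinct columns differ
    (hdist : ∀ (i : Fin M) (j j' : Fin M), j ≠ j' → α i j ≠ α i j') :
    ∀ᵐ ω ∂μ,
      (Matrix.of fun i j : Fin M => ∏ ℓ : Fin L, X i ℓ ω ^ α i j ℓ).det ≠ 0 := by
  have hP := MvPolynomial.det_of_prod_X_pow_ne_zero (R := ℝ) α fun i j j' h =>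
    by_contra fun hne => hdist i j j' hne h
  filter_upwards [hindep.ae_eval_ne_zero (fun p => (hmeas p.1 p.2).aemeasurable)
    (fun p => hcont p.1 p.2) hP] with ω hω
  rw [RingHom.map_det] at hω
  convert hω
  ext i j
  simp

theorem stmt17 (M L : ℕ)
    {Ω : Type*} [MeasurableSpace Ω] (μ : Measure Ω) [IsProbabilityMeasure μ]
    (X : Fin M → Fin L → Ω → ℝ)
    (hmeas : ∀ i ℓ, Measurable (X i ℓ))
    -- the variables `X i ℓ` are mutually independent
    (hindep : iIndepFun
      (fun x : Fin M × Fin L => X x.1 x.2) μ)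
    -- each variable has a continuous (atomless) distribution
    (hcont : ∀ (i : Fin M) (ℓ : Fin L) (c : ℝ), μ {ω | X i ℓ ω = c} = 0)
    (α : Fin M → Fin M → Fin L → ℕ)
    (hpos : ∀ i j ℓ, 0 < α i j ℓ)
    -- within each row, exponent vectors of distinct columns differ
    (hdist : ∀ (i : Fin M) (j j' : Fin M), j ≠ j' → α i j ≠ α i j') :
    ∀ᵐ ω ∂μ,
      (Matrix.of fun i j : Fin M => ∏ ℓ : Fin L, X i ℓ ω ^ α i j ℓ).det ≠ 0 :=
  stmt17_general M L μ X hmeas hindep hcont α hdist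
end
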